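/- Let A = Aᵀ with W = tr(A)I − A positive definite, let λ_max = λ_max(W), ξ = λ_min(W)/λ_max, and let k satisfy |k| < 1/(2 λ_max √(6 − max{1, 4ξ²})). Then for all R ∈ SO(3): (i) |k V_A(R)| < 1, so θ(R) = 2 arcsin(k V_A(R)) is well defined, and (ii) if R = R_a(θ(R), u)ᵀ for some u ∈ S², then R = I. -/

import Mathlib

open Matrix Real

noncomputable section

/-- The skew-symmetric cross-product matrix `[u]ₓ`. -/
def skew (u : Fin 3 → ℝ) : Matrix (Fin 3) (Fin 3) ℝ :=
  !![0, -u 2, u 1; u 2, 0, -u 0; -u 1, u 0, 0]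

/-- Inverse of `skew` on skew-symmetric matrices. -/
def vex (M : Matrix (Fin 3) (Fin 3) ℝ) : Fin 3 → ℝ :=
  ![M 2 1, M 0 2, M 1 0]

/-- `ψ(A) = vex((A - Aᵀ)/2)`. -/
def psiMap (M : Matrix (Fin 3) (Fin 3) ℝ) : Fin 3 → ℝ :=
  vex ((1 / 2 : ℝ) • (M - Mᵀ))

/-- Cross product on `ℝ³`. -/
def cross3 (x y : Fin 3 → ℝ) : Fin 3 → ℝ :=
  ![x 1 * y 2 - x 2 * y 1, x 2 * y 0 - x 0 * y 2, x 0 * y 1 - x 1 * y 0]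

/-- Rodrigues rotation. -/
def Ra (θ : ℝ) (u : Fin 3 → ℝ) : Matrix (Fin 3) (Fin 3) ℝ :=
  1 + Real.sin θ • skew u + (1 - Real.cos θ) • (skew u * skew u)

/-- Membership in SO(3). -/
def SO3 (R : Matrix (Fin 3) (Fin 3) ℝ) : Prop :=
  R * Rᵀ = 1 ∧ R.det = 1

/-!
For `R ∈ SO(3)` put `c = (3 - tr R) / 2` and `N = (R + Rᵀ + (1 - tr R) I) / 2`. Cayley–Hamilton
gives `N² = c N`, hence `P = c I - N = I - (R + Rᵀ) / 2` satisfies `P² = c P`: so `c` is an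
eigenvalue of `P` (or `P = 0` and `c = tr P / 2 = 0`), and as the Rayleigh quotients of `P` lie in
`[0, 2]`, `0 ≤ c ≤ 2`. For symmetric `A`, `V_A(R) = tr (W N)`, and `c tr (W N) = tr (Nᵀ W N)` lies
between `λ_min` and `λ_max` times `tr (Nᵀ N) = c²`. Thus `0 ≤ V_A(R) ≤ 2 λ_max`, and the bound on
`k` gives `|k V_A(R)| ≤ 2 |k| λ_max < 1`.

If `R = R_a(θ, u)ᵀ` with `θ = 2 arcsin (k V)`, then `V = (1 - cos θ) uᵀWu = 2 k² V² uᵀWu`. Were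
`V > 0`, this would give `1 = 2 k² V uᵀWu ≤ (2 |k| λ_max)² < 1`. Hence `V = 0`, so `θ = 0` and
`R = R_a(0, u)ᵀ = I`.
-/

section QuadraticForm

variable {n : Type*} [Fintype n]

lemma trace_transpose_mul_mul_eq_sum {R : Type*} [CommSemiring R] (N W : Matrix n n R) :
    (Nᵀ * W * N).trace = ∑ j, Nᵀ j ⬝ᵥ (W *ᵥ Nᵀ j) := by
  simp only [trace, diag, mul_apply, transpose_apply, dotProduct, mulVec, Finset.mul_sum,
    Finset.sum_mul]
  exact Finset.sum_congr rfl fun _ _ => Finset.sum_comm.trans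
    (Finset.sum_congr rfl fun _ _ => Finset.sum_congr rfl fun _ _ => by ring)

lemma abs_dotProduct_mulVec_le [DecidableEq n] {R : Matrix n n ℝ} (hR : Rᵀ * R = 1) (x : n → ℝ) :
    |x ⬝ᵥ (R *ᵥ x)| ≤ x ⬝ᵥ x := by
  have hRx : (R *ᵥ x) ⬝ᵥ (R *ᵥ x) = x ⬝ᵥ x := by
    nth_rewrite 1 [← vecMul_transpose]
    rw [← dotProduct_mulVec, mulVec_mulVec, hR, one_mulVec]
  have hsub := dotProduct_self_star_nonneg (x - R *ᵥ x)
  have hadd := dotProduct_self_star_nonneg (x + R *ᵥ x)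
  simp only [star_trivial, sub_dotProduct, dotProduct_sub, add_dotProduct, dotProduct_add,
    hRx, dotProduct_comm (R *ᵥ x) x] at hsub hadd
  exact abs_le.mpr ⟨by linarith, by linarith⟩

lemma trace_mul_le_of_mul_self_eq_smul [DecidableEq n] {W N : Matrix n n ℝ} {c β : ℝ}
    (hW : ∀ x, x ⬝ᵥ (W *ᵥ x) ≤ β * (x ⬝ᵥ x)) (hN : Nᵀ = N) (hNN : N * N = c • N)
    (hc : 0 ≤ c) : (W * N).trace ≤ β * N.trace := by
  obtain rfl | hc := hc.eq_or_lt
  · have : N = 0 := by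
      rw [← conjTranspose_mul_self_eq_zero, conjTranspose_eq_transpose_of_trivial, hN, hNN,
        zero_smul]
    simp [this]
  have hsum := trace_transpose_mul_mul_eq_sum N W
  have hgram := trace_transpose_mul_mul_eq_sum N 1
  simp only [one_mulVec, Matrix.mul_one] at hgram
  have key : c * (W * N).trace ≤ c * (β * N.trace) :=
    calc c * (W * N).trace = (Nᵀ * W * N).trace := by
          rw [hN, trace_mul_comm (N * W) N, ← Matrix.mul_assoc, hNN, smul_mul_assoc,
            trace_smul, smul_eq_mul, trace_mul_comm N W]
      _ ≤ β * (Nᵀ * N).trace := by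
          rw [hsum, hgram, Finset.mul_sum]; exact Finset.sum_le_sum fun j _ => hW _
      _ = c * (β * N.trace) := by rw [hN, hNN, trace_smul, smul_eq_mul]; ring
  exact le_of_mul_le_mul_left key hc

lemma le_trace_mul_of_mul_self_eq_smul [DecidableEq n] {W N : Matrix n n ℝ} {c α : ℝ}
    (hW : ∀ x, α * (x ⬝ᵥ x) ≤ x ⬝ᵥ (W *ᵥ x)) (hN : Nᵀ = N) (hNN : N * N = c • N)
    (hc : 0 ≤ c) : α * N.trace ≤ (W * N).trace := by
  have := trace_mul_le_of_mul_self_eq_smul (W := -W) (β := -α)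
    (fun x => by simpa [neg_mulVec] using hW x) hN hNN hc
  simpa [Matrix.neg_mul, trace_neg] using this

lemma exists_mulVec_eq_smul_of_mul_self_eq_smul {M : Matrix n n ℝ} {c : ℝ}
    (hMM : M * M = c • M) (hM : M ≠ 0) : ∃ v ≠ 0, M *ᵥ v = c • v := by
  obtain ⟨i, j, hij⟩ : ∃ i j, M i j ≠ 0 := by
    by_contra! h
    exact hM (Matrix.ext h)
  refine ⟨Mᵀ j, fun h => hij (congrFun h i), funext fun r => ?_⟩
  simpa [mulVec, dotProduct, mul_apply] using congrFun (congrFun hMM r) j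

lemma mem_Icc_of_mulVec_eq_smul {M : Matrix n n ℝ} {c α β : ℝ} {v : n → ℝ} (hv : v ≠ 0)
    (hMv : M *ᵥ v = c • v) (hα : ∀ x, α * (x ⬝ᵥ x) ≤ x ⬝ᵥ (M *ᵥ x))
    (hβ : ∀ x, x ⬝ᵥ (M *ᵥ x) ≤ β * (x ⬝ᵥ x)) : c ∈ Set.Icc α β := by
  have hvv : 0 < v ⬝ᵥ v := by simpa using dotProduct_star_self_pos_iff.mpr hv
  have hc : v ⬝ᵥ (M *ᵥ v) = c * (v ⬝ᵥ v) := by rw [hMv, dotProduct_smul, smul_eq_mul]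
  exact ⟨le_of_mul_le_mul_right (hc ▸ hα v) hvv, le_of_mul_le_mul_right (hc ▸ hβ v) hvv⟩

end QuadraticForm

lemma adjugate_fin_three_eq {R : Type*} [CommRing R] (M : Matrix (Fin 3) (Fin 3) R) :
    adjugate M = M * M - M.trace • M + (adjugate M).trace • 1 := by
  ext i j
  fin_cases i <;> fin_cases j <;>
    simp [adjugate_fin_three, trace_fin_three, mul_apply, Fin.sum_univ_three, one_apply] <;> ring

/-- For `R = R_a(φ, u)` this is `1 - cos φ`. -/
def rotVersine (R : Matrix (Fin 3) (Fin 3) ℝ) : ℝ :=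
  (3 - R.trace) / 2

/-- For `R = R_a(φ, u)` this is `(1 - cos φ) u uᵀ`. -/
def axisOuter (R : Matrix (Fin 3) (Fin 3) ℝ) : Matrix (Fin 3) (Fin 3) ℝ :=
  (1 / 2 : ℝ) • (R + Rᵀ + (1 - R.trace) • 1)

lemma axisOuter_transpose (R : Matrix (Fin 3) (Fin 3) ℝ) : (axisOuter R)ᵀ = axisOuter R := by
  rw [axisOuter, transpose_smul, transpose_add, transpose_add, transpose_transpose, transpose_smul,
    transpose_one, add_comm Rᵀ R]

lemma trace_axisOuter (R : Matrix (Fin 3) (Fin 3) ℝ) : (axisOuter R).trace = rotVersine R := by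
  simp only [axisOuter, rotVersine, trace_smul, trace_add, trace_transpose, trace_one,
    Fintype.card_fin, Nat.cast_ofNat, smul_eq_mul]
  ring

lemma trace_mul_one_sub_eq_trace_mul_axisOuter {A W : Matrix (Fin 3) (Fin 3) ℝ} (hA : Aᵀ = A)
    (hW : W = A.trace • 1 - A) (R : Matrix (Fin 3) (Fin 3) ℝ) :
    (A * (1 - R)).trace = (W * axisOuter R).trace := by
  have hARt : (A * Rᵀ).trace = (A * R).trace := by
    rw [← trace_transpose, transpose_mul, transpose_transpose, hA, trace_mul_comm]
  have hAN : (A * axisOuter R).trace = (A * R).trace + (1 - R.trace) * A.trace / 2 := by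
    simp only [axisOuter, mul_smul_comm, Matrix.mul_add, trace_smul, trace_add, Matrix.mul_one,
      hARt, smul_eq_mul]
    ring
  rw [hW, Matrix.sub_mul, smul_mul_assoc, Matrix.one_mul, trace_sub, trace_smul, hAN,
    trace_axisOuter, rotVersine, Matrix.mul_sub, trace_sub, Matrix.mul_one, smul_eq_mul]
  ring

namespace SO3

variable {R : Matrix (Fin 3) (Fin 3) ℝ}

lemma transpose_mul_self (hR : SO3 R) : Rᵀ * R = 1 :=
  mul_eq_one_comm.mp hR.1

lemma adjugate_eq_transpose (hR : SO3 R) : adjugate R = Rᵀ := by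
  rw [← inv_eq_right_inv hR.1, inv_def, hR.2, Ring.inverse_one, one_smul]

/-- Cayley–Hamilton, with `adj R = Rᵀ` and `tr (adj R) = tr R`. -/
lemma mul_self_eq (hR : SO3 R) : R * R = Rᵀ + R.trace • R - R.trace • 1 := by
  have h := adjugate_fin_three_eq R
  rw [adjugate_eq_transpose hR, trace_transpose] at h
  rw [h]; abel

lemma axisOuter_mul_self (hR : SO3 R) : axisOuter R * axisOuter R = rotVersine R • axisOuter R := by
  have hRR := mul_self_eq hR
  have hRtRt : Rᵀ * Rᵀ = R + R.trace • Rᵀ - R.trace • 1 := by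
    rw [← transpose_mul, hRR]; simp
  simp only [axisOuter, rotVersine, add_mul, mul_add, smul_mul_assoc,
    mul_smul_comm, Matrix.one_mul, Matrix.mul_one, hRR, hRtRt, hR.1, transpose_mul_self hR]
  module

lemma rotVersine_mem_Icc (hR : SO3 R) : rotVersine R ∈ Set.Icc 0 2 := by
  set P := rotVersine R • (1 : Matrix (Fin 3) (Fin 3) ℝ) - axisOuter R with hP
  have hPP : P * P = rotVersine R • P := by
    simp only [hP, Matrix.sub_mul, Matrix.mul_sub, smul_mul_assoc, mul_smul_comm, Matrix.one_mul,
      Matrix.mul_one, axisOuter_mul_self hR]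
    module
  have hPR : P = 1 - (1 / 2 : ℝ) • (R + Rᵀ) := by
    rw [hP, axisOuter, rotVersine]; module
  have hquad (x : Fin 3 → ℝ) : x ⬝ᵥ (P *ᵥ x) = x ⬝ᵥ x - x ⬝ᵥ (R *ᵥ x) := by
    have hRt : x ⬝ᵥ (Rᵀ *ᵥ x) = x ⬝ᵥ (R *ᵥ x) := by
      rw [dotProduct_mulVec, vecMul_transpose, dotProduct_comm]
    rw [hPR, sub_mulVec, one_mulVec, smul_mulVec, add_mulVec, dotProduct_sub, dotProduct_smul,
      dotProduct_add, hRt, smul_eq_mul]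
    ring
  by_cases hP0 : P = 0
  · have htr : P.trace = 2 * rotVersine R := by
      rw [hP, trace_sub, trace_smul, trace_one, trace_axisOuter]
      simp only [Fintype.card_fin, smul_eq_mul]
      ring
    rw [hP0, trace_zero] at htr
    exact ⟨by linarith, by linarith⟩
  obtain ⟨v, hv, hPv⟩ := exists_mulVec_eq_smul_of_mul_self_eq_smul hPP hP0
  have hRx := abs_dotProduct_mulVec_le (transpose_mul_self hR)
  refine mem_Icc_of_mulVec_eq_smul hv hPv (fun x => ?_) (fun x => ?_) <;>
    linarith [hquad x, (abs_le.mp (hRx x)).1, (abs_le.mp (hRx x)).2]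

lemma trace_mul_one_sub_mem_Icc {A W : Matrix (Fin 3) (Fin 3) ℝ} (hA : Aᵀ = A)
    (hW : W = A.trace • 1 - A) {lmin lmax : ℝ}
    (hmin : ∀ x : Fin 3 → ℝ, lmin * (x ⬝ᵥ x) ≤ x ⬝ᵥ (W *ᵥ x))
    (hmax : ∀ x : Fin 3 → ℝ, x ⬝ᵥ (W *ᵥ x) ≤ lmax * (x ⬝ᵥ x)) (hR : SO3 R) :
    (A * (1 - R)).trace ∈ Set.Icc (lmin * rotVersine R) (lmax * rotVersine R) := by
  have hc := (rotVersine_mem_Icc hR).1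
  rw [trace_mul_one_sub_eq_trace_mul_axisOuter hA hW, ← trace_axisOuter]
  exact ⟨le_trace_mul_of_mul_self_eq_smul hmin (axisOuter_transpose R) (axisOuter_mul_self hR) hc,
    trace_mul_le_of_mul_self_eq_smul hmax (axisOuter_transpose R) (axisOuter_mul_self hR) hc⟩

lemma trace_mul_one_sub_mem_Icc_zero {A W : Matrix (Fin 3) (Fin 3) ℝ} (hA : Aᵀ = A)
    (hW : W = A.trace • 1 - A) {lmin lmax : ℝ}
    (hmin : ∀ x : Fin 3 → ℝ, lmin * (x ⬝ᵥ x) ≤ x ⬝ᵥ (W *ᵥ x))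
    (hmax : ∀ x : Fin 3 → ℝ, x ⬝ᵥ (W *ᵥ x) ≤ lmax * (x ⬝ᵥ x)) (hlmin : 0 ≤ lmin)
    (hlmax : 0 ≤ lmax) (hR : SO3 R) :
    (A * (1 - R)).trace ∈ Set.Icc 0 (2 * lmax) := by
  obtain ⟨hc0, hc2⟩ := rotVersine_mem_Icc hR
  obtain ⟨hVmin, hVmax⟩ := trace_mul_one_sub_mem_Icc hA hW hmin hmax hR
  exact ⟨hVmin.trans' (by positivity), hVmax.trans (by nlinarith)⟩

end SO3

lemma trace_mul_one_sub_transpose_Ra {A : Matrix (Fin 3) (Fin 3) ℝ} (hA : Aᵀ = A) (θ : ℝ)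
    {u : Fin 3 → ℝ} (hu : u ⬝ᵥ u = 1) :
    (A * (1 - (Ra θ u)ᵀ)).trace = (1 - cos θ) * (A.trace - u ⬝ᵥ (A *ᵥ u)) := by
  have h01 : A 1 0 = A 0 1 := by simpa using congrFun (congrFun hA.symm _) _
  have h02 : A 2 0 = A 0 2 := by simpa using congrFun (congrFun hA.symm _) _
  have h12 : A 2 1 = A 1 2 := by simpa using congrFun (congrFun hA.symm _) _
  have hu' : u 0 * u 0 + u 1 * u 1 + u 2 * u 2 = 1 := by
    simpa [dotProduct, Fin.sum_univ_three] using hu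
  simp only [Ra, skew, trace_fin_three, mul_apply, dotProduct, mulVec, Fin.sum_univ_three,
    one_apply, transpose_apply, Matrix.add_apply, Matrix.sub_apply, Matrix.smul_apply,
    smul_eq_mul]
  norm_num [h01, h02, h12, cons_val_two, vecHead, vecTail]
  linear_combination ((1 - cos θ) * (A 0 0 + A 1 1 + A 2 2)) * hu'

lemma cos_two_mul_arcsin {x : ℝ} (h₁ : -1 ≤ x) (h₂ : x ≤ 1) :
    cos (2 * arcsin x) = 1 - 2 * x ^ 2 := by
  rw [cos_two_mul_eq_one_sub, sin_arcsin h₁ h₂]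

lemma two_mul_abs_mul_lt_one {k lmin lmax : ℝ} (hpos : 0 < lmin) (hle : lmin ≤ lmax)
    (hk : |k| < 1 / (2 * lmax * √(6 - max 1 (4 * (lmin / lmax) ^ 2)))) :
    2 * |k| * lmax < 1 := by
  have hlmax : 0 < lmax := hpos.trans_le hle
  have hξ : (lmin / lmax) ^ 2 ≤ 1 :=
    pow_le_one₀ (div_pos hpos hlmax).le ((div_le_one hlmax).mpr hle)
  have hmax : max 1 (4 * (lmin / lmax) ^ 2) ≤ 4 := max_le (by norm_num) (by linarith)
  have hsqrt : 1 ≤ √(6 - max 1 (4 * (lmin / lmax) ^ 2)) := one_le_sqrt.mpr (by linarith)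
  have hk' := (lt_div_iff₀ (by positivity)).mp hk
  nlinarith [abs_nonneg k]

lemma eq_zero_of_eq_two_mul_sq_mul {k V m L : ℝ} (hV : V ≤ 2 * L) (hm₀ : 0 ≤ m) (hm : m ≤ L)
    (hk : 2 * |k| * L < 1) (h : V = 2 * (k * V) ^ 2 * m) : V = 0 := by
  have hL : 0 ≤ L := hm₀.trans hm
  by_contra hV₀
  have h1 : 1 = 2 * k ^ 2 * V * m := mul_left_cancel₀ hV₀ (by linear_combination h)
  have h2 : 2 * k ^ 2 * V * m ≤ (2 * |k| * L) ^ 2 :=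
    calc 2 * k ^ 2 * V * m ≤ 2 * k ^ 2 * (2 * L) * L := by gcongr
      _ = (2 * |k| * L) ^ 2 := by rw [mul_pow, mul_pow, sq_abs]; ring
  have h3 : (2 * |k| * L) ^ 2 < 1 := pow_lt_one₀ (by positivity) hk two_ne_zero
  linarith

theorem stmt_18_general (A : Matrix (Fin 3) (Fin 3) ℝ) (hA : Aᵀ = A)
    (W : Matrix (Fin 3) (Fin 3) ℝ) (hW : W = A.trace • (1 : Matrix (Fin 3) (Fin 3) ℝ) - A)
    (lmin lmax : ℝ) (hpos : 0 < lmin)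
    (hmin : ∀ x : Fin 3 → ℝ, lmin * (x ⬝ᵥ x) ≤ x ⬝ᵥ (W *ᵥ x))
    (hmax : ∀ x : Fin 3 → ℝ, x ⬝ᵥ (W *ᵥ x) ≤ lmax * (x ⬝ᵥ x))
    (k : ℝ)
    (hk : |k| < 1 / (2 * lmax * Real.sqrt (6 - max 1 (4 * (lmin / lmax) ^ 2))))
    (R : Matrix (Fin 3) (Fin 3) ℝ) (hR : SO3 R) :
    |k * (A * (1 - R)).trace| < 1 ∧
      (∀ u : Fin 3 → ℝ, u ⬝ᵥ u = 1 →
        R = (Ra (2 * Real.arcsin (k * (A * (1 - R)).trace)) u)ᵀ → R = 1) := by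
  have hle : lmin ≤ lmax := by simpa using (hmin (Pi.single 0 1)).trans (hmax _)
  have hlmax : 0 < lmax := hpos.trans_le hle
  have hk2 : 2 * |k| * lmax < 1 := two_mul_abs_mul_lt_one hpos hle hk
  obtain ⟨hV0, hV2⟩ := hR.trace_mul_one_sub_mem_Icc_zero hA hW hmin hmax hpos.le hlmax.le
  set V := (A * (1 - R)).trace
  have habs : |k * V| < 1 := by
    rw [abs_mul, abs_of_nonneg hV0]; nlinarith [abs_nonneg k]
  refine ⟨habs, fun u hu hRu => ?_⟩
  obtain ⟨hkV₁, hkV₂⟩ := abs_lt.mp habs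
  have hVu : V = 2 * (k * V) ^ 2 * (u ⬝ᵥ (W *ᵥ u)) := by
    calc V = (A * (1 - (Ra (2 * arcsin (k * V)) u)ᵀ)).trace := by rw [← hRu]
      _ = 2 * (k * V) ^ 2 * (u ⬝ᵥ (W *ᵥ u)) := by
        rw [trace_mul_one_sub_transpose_Ra hA _ hu, cos_two_mul_arcsin hkV₁.le hkV₂.le, hW,
          sub_mulVec, smul_mulVec, one_mulVec, dotProduct_sub, dotProduct_smul, hu, smul_eq_mul]
        ring
  have hV : V = 0 := eq_zero_of_eq_two_mul_sq_mul hV2 (by nlinarith [hmin u])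
    (by nlinarith [hmax u]) hk2 hVu
  rw [hRu, hV, mul_zero, arcsin_zero, mul_zero]
  simp [Ra]

/-- With `|k| < 1/(2λ_max√(6 − max{1,4ξ²}))`: the warping angle
`θ(R) = 2 arcsin(k V_A(R))` is well defined, and `R = R_a(θ(R),u)ᵀ` forces `R = I`. -/
theorem stmt_18 (A : Matrix (Fin 3) (Fin 3) ℝ) (hA : Aᵀ = A)
    (W : Matrix (Fin 3) (Fin 3) ℝ) (hW : W = A.trace • (1 : Matrix (Fin 3) (Fin 3) ℝ) - A)
    (lmin lmax : ℝ) (hpos : 0 < lmin)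
    (hmin : ∀ x : Fin 3 → ℝ, lmin * (x ⬝ᵥ x) ≤ x ⬝ᵥ (W *ᵥ x))
    (hmax : ∀ x : Fin 3 → ℝ, x ⬝ᵥ (W *ᵥ x) ≤ lmax * (x ⬝ᵥ x))
    (hev_min : ∃ x : Fin 3 → ℝ, x ≠ 0 ∧ W *ᵥ x = lmin • x)
    (hev_max : ∃ x : Fin 3 → ℝ, x ≠ 0 ∧ W *ᵥ x = lmax • x)
    (k : ℝ)
    (hk : |k| < 1 / (2 * lmax * Real.sqrt (6 - max 1 (4 * (lmin / lmax) ^ 2))))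
    (R : Matrix (Fin 3) (Fin 3) ℝ) (hR : SO3 R) :
    |k * (A * (1 - R)).trace| < 1 ∧
      (∀ u : Fin 3 → ℝ, u ⬝ᵥ u = 1 →
        R = (Ra (2 * Real.arcsin (k * (A * (1 - R)).trace)) u)ᵀ → R = 1) :=
  stmt_18_general A hA W hW lmin lmax hpos hmin hmax k hk R hR
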